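/- Let f : [a,b] → ℝ be continuous and integrable on [a,b] with 0 ≤ a < b, let l ≥ 1, and suppose |f|^l is convex on [a,b]. Then for any fixed p, q > 0, ∫_a^b (x-a)^p (b-x)^q f(x) dx ≤ (b-a)^{p+q+1} [β(p+1, q+1)]^{(l-1)/l} [β(q+2, p+1)|f(a)|^l + β(q+1, p+2)|f(b)|^l]^{1/l}. -/

import Mathlib

/-!
Put `w x = (x - a)^p (b - x)^q`. Hölder's inequality for the measure `w x dx` bounds
`∫ w |f|` by `(∫ w)^(1 - 1/l) (∫ w |f|^l)^(1/l)`. The first factor is a Beta integral, and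
convexity bounds `|f x|^l` by the chord `((b - x) |f a|^l + (x - a) |f b|^l) / (b - a)`,
whose two pieces again integrate against `w` to Beta integrals.
-/

open Real Set MeasureTheory intervalIntegral

noncomputable def beta (x y : ℝ) : ℝ := ∫ t in (0:ℝ)..1, t ^ (x-1) * (1-t) ^ (y-1)

lemma beta_symm (x y : ℝ) : beta x y = beta y x := by
  have h := integral_comp_sub_left (a := (0:ℝ)) (b := 1) (fun s => s ^ (y-1) * (1-s) ^ (x-1)) 1
  simp only [sub_zero, sub_self, sub_sub_cancel] at h
  rw [beta, beta, ← h]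
  exact intervalIntegral.integral_congr fun t _ => mul_comm _ _

lemma beta_nonneg (x y : ℝ) : 0 ≤ beta x y :=
  integral_nonneg zero_le_one fun _ ht =>
    mul_nonneg (rpow_nonneg ht.1 _) (rpow_nonneg (sub_nonneg.2 ht.2) _)

lemma integral_sub_rpow_mul_sub_rpow {a b : ℝ} (hab : a < b) (r s : ℝ) :
    ∫ x in a..b, (x - a) ^ r * (b - x) ^ s = (b - a) ^ (r + s + 1) * beta (r + 1) (s + 1) := by
  have hba : 0 < b - a := sub_pos.2 hab
  have h := smul_integral_comp_mul_add (a := (0:ℝ)) (b := 1)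
    (fun x => (x - a) ^ r * (b - x) ^ s) (b - a) a
  simp only [mul_zero, zero_add, mul_one, sub_add_cancel, smul_eq_mul] at h
  rw [← h, beta, rpow_add_one hba.ne', mul_comm _ (b - a), mul_assoc]
  congr 1
  rw [← intervalIntegral.integral_const_mul]
  refine intervalIntegral.integral_congr fun t ht => ?_
  rw [uIcc_of_le zero_le_one] at ht
  have e1 : (b - a) * t + a - a = (b - a) * t := by ring
  have e2 : b - ((b - a) * t + a) = (b - a) * (1 - t) := by ring
  simp only [e1, e2, add_sub_cancel_right]
  rw [mul_rpow hba.le ht.1, mul_rpow hba.le (sub_nonneg.2 ht.2), rpow_add hba]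
  ring

lemma rpow_sub_one_div_mul_rpow_one_div {x : ℝ} (hx : 0 ≤ x) {l : ℝ} (hl : l ≠ 0) :
    x ^ ((l - 1) / l) * x ^ (1 / l) = x := by
  have hsum : (l - 1) / l + 1 / l = 1 := by rw [← add_div, sub_add_cancel, div_self hl]
  rw [← rpow_add' hx (by rw [hsum]; exact one_ne_zero), hsum, rpow_one]

lemma mul_rpow_sub_one_div_mul_rpow_one_div_le {l X y I C : ℝ} (hl : 0 < l) (hX : 0 ≤ X)
    (hy : 0 ≤ y) (hC : 0 ≤ C) (hI : 0 ≤ I) (hIC : I ≤ X * C) :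
    (X * y) ^ ((l - 1) / l) * I ^ (1 / l) ≤ X * y ^ ((l - 1) / l) * C ^ (1 / l) :=
  calc (X * y) ^ ((l - 1) / l) * I ^ (1 / l)
      ≤ (X * y) ^ ((l - 1) / l) * (X * C) ^ (1 / l) := by gcongr
    _ = X * y ^ ((l - 1) / l) * C ^ (1 / l) := by
      rw [mul_rpow hX hy, mul_rpow hX hC]
      linear_combination y ^ ((l - 1) / l) * C ^ (1 / l) *
        rpow_sub_one_div_mul_rpow_one_div hX hl.ne'

lemma continuous_sub_rpow_mul_sub_rpow (a b : ℝ) {r s : ℝ} (hr : 0 ≤ r) (hs : 0 ≤ s) :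
    Continuous fun x : ℝ => (x - a) ^ r * (b - x) ^ s :=
  ((continuous_id.sub continuous_const).rpow_const fun _ => Or.inr hr).mul
    ((continuous_const.sub continuous_id).rpow_const fun _ => Or.inr hs)

lemma ConvexOn.le_chord_of_mem_Icc {f : ℝ → ℝ} {a b x : ℝ} (hf : ConvexOn ℝ (Icc a b) f)
    (hab : a < b) (hx : x ∈ Icc a b) :
    f x ≤ (b - x) / (b - a) * f a + (x - a) / (b - a) * f b := by
  have hba : 0 < b - a := sub_pos.2 hab
  have hcomb : (b - x) / (b - a) * a + (x - a) / (b - a) * b = x := by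
    field_simp; ring
  simpa only [smul_eq_mul, hcomb] using
    hf.2 (left_mem_Icc.2 hab.le) (right_mem_Icc.2 hab.le)
      (div_nonneg (sub_nonneg.2 hx.2) hba.le) (div_nonneg (sub_nonneg.2 hx.1) hba.le)
      (by field_simp; ring)

lemma integral_sub_rpow_mul_sub_rpow_mul_chord {a b p q : ℝ} (hab : a < b) (hp : 0 ≤ p)
    (hq : 0 ≤ q) (A B : ℝ) :
    ∫ x in a..b, (x - a) ^ p * (b - x) ^ q * ((b - x) / (b - a) * A + (x - a) / (b - a) * B) =
      (b - a) ^ (p + q + 1) * (beta (q + 2) (p + 1) * A + beta (q + 1) (p + 2) * B) := by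
  have hba : 0 < b - a := sub_pos.2 hab
  have hleft := (continuous_sub_rpow_mul_sub_rpow a b hp (by linarith : 0 ≤ q + 1))
    |>.intervalIntegrable (μ := volume) a b
  have hright := (continuous_sub_rpow_mul_sub_rpow a b (by linarith : 0 ≤ p + 1) hq)
    |>.intervalIntegrable (μ := volume) a b
  have hsplit : ∀ x ∈ uIcc a b,
      (x - a) ^ p * (b - x) ^ q * ((b - x) / (b - a) * A + (x - a) / (b - a) * B) =
        A / (b - a) * ((x - a) ^ p * (b - x) ^ (q + 1)) +
          B / (b - a) * ((x - a) ^ (p + 1) * (b - x) ^ q) := by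
    intro x hx
    rw [uIcc_of_le hab.le] at hx
    rw [rpow_add_one' (sub_nonneg.2 hx.2) (by linarith),
      rpow_add_one' (sub_nonneg.2 hx.1) (by linarith)]
    field_simp
  rw [intervalIntegral.integral_congr hsplit,
    integral_add (hleft.const_mul _) (hright.const_mul _), intervalIntegral.integral_const_mul,
    intervalIntegral.integral_const_mul, integral_sub_rpow_mul_sub_rpow hab,
    integral_sub_rpow_mul_sub_rpow hab, beta_symm (q + 2), beta_symm (q + 1),
    show p + (q + 1) + 1 = p + q + 1 + 1 by ring, show p + 1 + q + 1 = p + q + 1 + 1 by ring,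
    rpow_add_one hba.ne']
  field_simp
  norm_num [add_assoc]

lemma integral_sub_rpow_mul_sub_rpow_mul_le_of_convexOn {a b p q : ℝ} {g : ℝ → ℝ}
    (hab : a < b) (hp : 0 ≤ p) (hq : 0 ≤ q) (hg : ConvexOn ℝ (Icc a b) g)
    (hint : IntervalIntegrable (fun x => (x - a) ^ p * (b - x) ^ q * g x) volume a b) :
    ∫ x in a..b, (x - a) ^ p * (b - x) ^ q * g x ≤
      (b - a) ^ (p + q + 1) * (beta (q + 2) (p + 1) * g a + beta (q + 1) (p + 2) * g b) := by
  rw [← integral_sub_rpow_mul_sub_rpow_mul_chord hab hp hq]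
  refine integral_mono_on hab.le hint ?_ fun x hx => ?_
  · exact ((continuous_sub_rpow_mul_sub_rpow a b hp hq).mul (by fun_prop)).intervalIntegrable a b
  · exact mul_le_mul_of_nonneg_left (hg.le_chord_of_mem_Icc hab hx)
      (mul_nonneg (rpow_nonneg (sub_nonneg.2 hx.1) _) (rpow_nonneg (sub_nonneg.2 hx.2) _))

lemma integral_mul_le_integral_rpow_mul_integral_mul_rpow {α : Type*} [MeasurableSpace α]
    {μ : Measure α} {w g : α → ℝ} {l : ℝ} (hl : 1 ≤ l) (hw : 0 ≤ᵐ[μ] w) (hg : 0 ≤ᵐ[μ] g)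
    (hgm : AEStronglyMeasurable g μ) (hwi : Integrable w μ)
    (hwgi : Integrable (fun x => w x * g x ^ l) μ) :
    ∫ x, w x * g x ∂μ ≤ (∫ x, w x ∂μ) ^ ((l - 1) / l) * (∫ x, w x * g x ^ l ∂μ) ^ (1 / l) := by
  rcases hl.eq_or_lt with rfl | hl
  · simp
  have hl0 : 0 < l := one_pos.trans hl
  have hm := (Real.HolderConjugate.conjExponent hl).symm
  set m := l.conjExponent
  have hexp : (l - 1) / l * m = 1 := by
    simp only [m, Real.conjExponent]; field_simp [(sub_pos.2 hl).ne']
  set F : α → ℝ := fun x => w x ^ ((l - 1) / l)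
  set G : α → ℝ := fun x => w x ^ (1 / l) * g x
  have hF0 : 0 ≤ᵐ[μ] F := hw.mono fun x hx => rpow_nonneg hx _
  have hG0 : 0 ≤ᵐ[μ] G := by
    filter_upwards [hw, hg] with x hwx hgx using mul_nonneg (rpow_nonneg hwx _) hgx
  have hFm : ∀ᵐ x ∂μ, F x ^ m = w x := by
    filter_upwards [hw] with x hx
    rw [← rpow_mul hx, hexp, rpow_one]
  have hGl : ∀ᵐ x ∂μ, G x ^ l = w x * g x ^ l := by
    filter_upwards [hw, hg] with x hwx hgx
    rw [mul_rpow (rpow_nonneg hwx _) hgx, ← rpow_mul hwx, one_div_mul_cancel hl0.ne', rpow_one]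
  have hF : MemLp F (ENNReal.ofReal m) μ := by
    rw [← integrable_norm_rpow_iff (hwi.aemeasurable.pow_const _).aestronglyMeasurable
      (by simpa using hm.pos) ENNReal.ofReal_ne_top, ENNReal.toReal_ofReal hm.nonneg]
    refine hwi.congr ?_
    filter_upwards [hFm, hF0] with x hx hFx
    rw [Real.norm_of_nonneg hFx, hx]
  have hG : MemLp G (ENNReal.ofReal l) μ := by
    have hGm : AEStronglyMeasurable G μ :=
      (hwi.aemeasurable.pow_const _).aestronglyMeasurable.mul hgm
    rw [← integrable_norm_rpow_iff hGm (by simpa using hl0) ENNReal.ofReal_ne_top,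
      ENNReal.toReal_ofReal hl0.le]
    refine hwgi.congr ?_
    filter_upwards [hGl, hG0] with x hx hGx
    rw [Real.norm_of_nonneg hGx, hx]
  have hFG : ∫ x, w x * g x ∂μ = ∫ x, F x * G x ∂μ := by
    refine integral_congr_ae ?_
    filter_upwards [hw] with x hx
    rw [← mul_assoc, rpow_sub_one_div_mul_rpow_one_div hx hl0.ne']
  calc ∫ x, w x * g x ∂μ = ∫ x, F x * G x ∂μ := hFG
    _ ≤ (∫ x, F x ^ m ∂μ) ^ (1 / m) * (∫ x, G x ^ l ∂μ) ^ (1 / l) :=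
      integral_mul_le_Lp_mul_Lq_of_nonneg hm hF0 hG0 hF hG
    _ = _ := by
      rw [integral_congr_ae hFm, integral_congr_ae hGl,
        show 1 / m = (l - 1) / l by simp only [m, Real.conjExponent, one_div_div]]

lemma intervalIntegral.integral_mul_le_integral_rpow_mul_integral_mul_rpow {a b l : ℝ}
    {w g : ℝ → ℝ} (hab : a ≤ b) (hl : 1 ≤ l) (hw : ContinuousOn w (Icc a b))
    (hg : ContinuousOn g (Icc a b)) (hw0 : ∀ x ∈ Icc a b, 0 ≤ w x)
    (hg0 : ∀ x ∈ Icc a b, 0 ≤ g x) :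
    ∫ x in a..b, w x * g x ≤
      (∫ x in a..b, w x) ^ ((l - 1) / l) * (∫ x in a..b, w x * g x ^ l) ^ (1 / l) := by
  have hgl : ContinuousOn (fun x => w x * g x ^ l) (Icc a b) :=
    hw.mul (hg.rpow_const fun _ _ => Or.inr (zero_le_one.trans hl))
  have hIoc : ∀ {P : ℝ → Prop}, (∀ x ∈ Icc a b, P x) → ∀ᵐ x ∂volume.restrict (Ioc a b), P x :=
    fun h => (ae_restrict_iff' measurableSet_Ioc).2 (ae_of_all _ fun x hx =>
      h x (Ioc_subset_Icc_self hx))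
  simp only [integral_of_le hab]
  exact _root_.integral_mul_le_integral_rpow_mul_integral_mul_rpow hl (hIoc hw0) (hIoc hg0)
    ((hg.mono Ioc_subset_Icc_self).aestronglyMeasurable measurableSet_Ioc)
    (hw.integrableOn_Icc.mono_set Ioc_subset_Icc_self)
    (hgl.integrableOn_Icc.mono_set Ioc_subset_Icc_self)

theorem stmt12_general (a b p q : ℝ) (f : ℝ → ℝ)
    (hab : a < b) (hp : 0 < p) (hq : 0 < q)
    (hcont : ContinuousOn f (Set.Icc a b))
    (l : ℝ) (hl : 1 ≤ l)
    (hf : ConvexOn ℝ (Set.Icc a b) (fun x => |f x| ^ l)) :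
    ∫ x in a..b, (x-a)^p * (b-x)^q * f x
      ≤ (b-a)^(p+q+1) * (beta (p+1) (q+1))^((l-1)/l)
          * (beta (q+2) (p+1) * |f a| ^ l + beta (q+1) (p+2) * |f b| ^ l) ^ (1/l) := by
  set w : ℝ → ℝ := fun x => (x - a) ^ p * (b - x) ^ q
  have hw : ContinuousOn w (Icc a b) :=
    (continuous_sub_rpow_mul_sub_rpow a b hp.le hq.le).continuousOn
  have hw0 : ∀ x ∈ Icc a b, 0 ≤ w x := fun x hx =>
    mul_nonneg (rpow_nonneg (sub_nonneg.2 hx.1) _) (rpow_nonneg (sub_nonneg.2 hx.2) _)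
  have hfl : ContinuousOn (fun x => |f x| ^ l) (Icc a b) :=
    hcont.abs.rpow_const fun _ _ => Or.inr (by linarith)
  calc ∫ x in a..b, w x * f x
      ≤ ∫ x in a..b, w x * |f x| :=
        integral_mono_on hab.le ((hw.mul hcont).intervalIntegrable_of_Icc hab.le)
          ((hw.mul hcont.abs).intervalIntegrable_of_Icc hab.le)
          fun x hx => mul_le_mul_of_nonneg_left (le_abs_self _) (hw0 x hx)
    _ ≤ (∫ x in a..b, w x) ^ ((l - 1) / l) * (∫ x in a..b, w x * |f x| ^ l) ^ (1 / l) :=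
      intervalIntegral.integral_mul_le_integral_rpow_mul_integral_mul_rpow hab.le hl hw
        hcont.abs hw0 fun x _ => abs_nonneg (f x)
    _ ≤ _ := by
      rw [integral_sub_rpow_mul_sub_rpow hab]
      exact mul_rpow_sub_one_div_mul_rpow_one_div_le (by linarith)
        (rpow_nonneg (sub_pos.2 hab).le _) (beta_nonneg _ _)
        (add_nonneg (mul_nonneg (beta_nonneg _ _) (by positivity))
          (mul_nonneg (beta_nonneg _ _) (by positivity)))
        (integral_nonneg hab.le fun x hx => mul_nonneg (hw0 x hx) (by positivity))
        (integral_sub_rpow_mul_sub_rpow_mul_le_of_convexOn hab hp.le hq.le hf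
          ((hw.mul hfl).intervalIntegrable_of_Icc hab.le))

theorem stmt12 (a b p q : ℝ) (f : ℝ → ℝ)
    (ha : 0 ≤ a) (hab : a < b) (hp : 0 < p) (hq : 0 < q)
    (hcont : ContinuousOn f (Set.Icc a b))
    (hint : IntervalIntegrable f volume a b)
    (l : ℝ) (hl : 1 ≤ l)
    (hf : ConvexOn ℝ (Set.Icc a b) (fun x => |f x| ^ l)) :
    ∫ x in a..b, (x-a)^p * (b-x)^q * f x
      ≤ (b-a)^(p+q+1) * (beta (p+1) (q+1))^((l-1)/l)
          * (beta (q+2) (p+1) * |f a| ^ l + beta (q+1) (p+2) * |f b| ^ l) ^ (1/l) :=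
  stmt12_general a b p q f hab hp hq hcont l hl hf
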